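/- arXiv:1308.0051 — 4 statements merged into one kernel-verified Lean document; each statement's English description precedes it below -/
import Mathlib

section
/- Let L = L* ∈ ℝ^{ν×ν}⟨x,x*⟩ be a symmetric matrix polynomial, and let X be a g-tuple of real n×n matrices with L(X) ⪰ 0. Then for every vector v ∈ ℝ^{ℓn}, the left module I({(X,v)}) = {p ∈ ℝ^{1×ℓ}⟨x,x*⟩ : p(X)v = 0} is L-real. If moreover L(X) ≻ 0, then I({(X,v)}) is strongly L-real for every v. -/
open scoped BigOperators
open Matrix

/-- The `2g` free letters: `Sum.inl i` is `xᵢ`, `Sum.inr i` is `xᵢ*`. -/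
abbrev Lttr (g : ℕ) := Fin g ⊕ Fin g

/-- The free real algebra `ℝ⟨x,x*⟩` on `2g` letters. -/
abbrev FreePoly (g : ℕ) := FreeAlgebra ℝ (Lttr g)

noncomputable def xvar {g : ℕ} (i : Fin g) : FreePoly g := FreeAlgebra.ι ℝ (Sum.inl i)

noncomputable def xstar {g : ℕ} (i : Fin g) : FreePoly g := FreeAlgebra.ι ℝ (Sum.inr i)

/-- The involution `*` on `ℝ⟨x,x*⟩`: linear, reverses products, swaps `xᵢ` and `xᵢ*`. -/
noncomputable def pstar {g : ℕ} (p : FreePoly g) : FreePoly g :=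
  MulOpposite.unop
    (FreeAlgebra.lift ℝ
      (fun l : Lttr g => MulOpposite.op (FreeAlgebra.ι ℝ (Sum.swap l))) p)

/-- Evaluation of a noncommutative polynomial at a `g`-tuple of real `n × n` matrices,
sending `xᵢ` to `X i` and `xᵢ*` to `(X i)ᵀ`. -/
noncomputable def evalP {g n : ℕ} (X : Fin g → Matrix (Fin n) (Fin n) ℝ) :
    FreePoly g →ₐ[ℝ] Matrix (Fin n) (Fin n) ℝ :=
  FreeAlgebra.lift ℝ (Sum.elim X (fun i => (X i)ᵀ))

/-- Entrywise (block) evaluation of a `ν × ℓ` matrix polynomial. -/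
noncomputable def evalM {g n ν ℓ : ℕ} (X : Fin g → Matrix (Fin n) (Fin n) ℝ)
    (p : Matrix (Fin ν) (Fin ℓ) (FreePoly g)) :
    Matrix (Fin ν × Fin n) (Fin ℓ × Fin n) ℝ :=
  fun ir js => evalP X (p ir.1 js.1) ir.2 js.2

/-- Evaluation of a row vector of polynomials (an element of `ℝ^{1×ℓ}⟨x,x*⟩`). -/
noncomputable def evalRow {g n ℓ : ℕ} (X : Fin g → Matrix (Fin n) (Fin n) ℝ)
    (p : Fin ℓ → FreePoly g) : Matrix (Fin n) (Fin ℓ × Fin n) ℝ :=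
  fun r js => evalP X (p js.1) r js.2

/-- The involution on matrices of polynomials: entrywise `*` combined with transpose. -/
noncomputable def starM {g a b : ℕ} (p : Matrix (Fin a) (Fin b) (FreePoly g)) :
    Matrix (Fin b) (Fin a) (FreePoly g) :=
  fun i j => pstar (p j i)

/-- For a row vector `p ∈ ℝ^{1×ℓ}⟨x,x*⟩`, the `ℓ × ℓ` matrix `p*p`. -/
noncomputable def sqForm {g ℓ : ℕ} (p : Fin ℓ → FreePoly g) :
    Matrix (Fin ℓ) (Fin ℓ) (FreePoly g) :=
  fun a b => pstar (p a) * p b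

/-- For `q ∈ ℝ^{ν×ℓ}⟨x,x*⟩`, the `ℓ × ℓ` matrix `q*Lq`. -/
noncomputable def quadForm {g ν ℓ : ℕ} (L : Matrix (Fin ν) (Fin ν) (FreePoly g))
    (q : Matrix (Fin ν) (Fin ℓ) (FreePoly g)) : Matrix (Fin ℓ) (Fin ℓ) (FreePoly g) :=
  starM q * L * q

/-- For row vectors `r, ι ∈ ℝ^{1×ℓ}⟨x,x*⟩`, the `ℓ × ℓ` matrix `r*ι`. -/
noncomputable def outerStar {g ℓ : ℕ} (r ι : Fin ℓ → FreePoly g) :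
    Matrix (Fin ℓ) (Fin ℓ) (FreePoly g) :=
  fun a b => pstar (r a) * ι b

/-- `m ∈ ℝ^{a×1}I`: every row of the matrix polynomial `m` lies in the left module `I`. -/
def rowsInM {g a ℓ : ℕ} (I : Submodule (FreePoly g) (Fin ℓ → FreePoly g))
    (m : Matrix (Fin a) (Fin ℓ) (FreePoly g)) : Prop :=
  ∀ i, m i ∈ I

/-- Every row of the matrix polynomial `m` lies in the real subspace `C`. -/
def rowsInR {g a ℓ : ℕ} (C : Submodule ℝ (Fin ℓ → FreePoly g))
    (m : Matrix (Fin a) (Fin ℓ) (FreePoly g)) : Prop :=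
  ∀ i, m i ∈ C

/-- The set `ℝ^{ℓ×1}I + I*ℝ^{1×ℓ}` of `ℓ × ℓ` matrix polynomials. -/
def modPlusStar {g ℓ : ℕ} (I : Submodule (FreePoly g) (Fin ℓ → FreePoly g)) :
    Set (Matrix (Fin ℓ) (Fin ℓ) (FreePoly g)) :=
  { m | ∃ u v : Matrix (Fin ℓ) (Fin ℓ) (FreePoly g),
      rowsInM I u ∧ rowsInM I v ∧ m = u + starM v }

/-- `I` is an `L`-real left module. -/
def IsLReal {g ν ℓ : ℕ} (L : Matrix (Fin ν) (Fin ν) (FreePoly g))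
    (I : Submodule (FreePoly g) (Fin ℓ → FreePoly g)) : Prop :=
  ∀ (a b : ℕ) (p : Fin a → (Fin ℓ → FreePoly g))
    (q : Fin b → Matrix (Fin ν) (Fin ℓ) (FreePoly g)),
    ((∑ i, sqForm (p i)) + ∑ j, quadForm L (q j)) ∈ modPlusStar I →
    (∀ i, p i ∈ I) ∧ ∀ j, rowsInM I (L * q j)

/-- `I` is a strongly `L`-real left module. -/
def IsLRealStrong {g ν ℓ : ℕ} (L : Matrix (Fin ν) (Fin ν) (FreePoly g))
    (I : Submodule (FreePoly g) (Fin ℓ → FreePoly g)) : Prop :=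
  ∀ (a b : ℕ) (p : Fin a → (Fin ℓ → FreePoly g))
    (q : Fin b → Matrix (Fin ν) (Fin ℓ) (FreePoly g)),
    ((∑ i, sqForm (p i)) + ∑ j, quadForm L (q j)) ∈ modPlusStar I →
    (∀ i, p i ∈ I) ∧ ∀ j, rowsInM I (q j)

/-- `I` is a real left module. -/
def IsRealMod {g ℓ : ℕ} (I : Submodule (FreePoly g) (Fin ℓ → FreePoly g)) : Prop :=
  ∀ (a : ℕ) (p : Fin a → (Fin ℓ → FreePoly g)),
    (∑ i, sqForm (p i)) ∈ modPlusStar I → ∀ i, p i ∈ I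

/-- The `L`-real radical of `I`: the smallest `L`-real left module containing `I`. -/
noncomputable def Lrad {g ν ℓ : ℕ} (L : Matrix (Fin ν) (Fin ν) (FreePoly g))
    (I : Submodule (FreePoly g) (Fin ℓ → FreePoly g)) :
    Submodule (FreePoly g) (Fin ℓ → FreePoly g) :=
  sInf { J | I ≤ J ∧ IsLReal L J }

/-- The strong `L`-real radical of `I`. -/
noncomputable def LradStrong {g ν ℓ : ℕ} (L : Matrix (Fin ν) (Fin ν) (FreePoly g))
    (I : Submodule (FreePoly g) (Fin ℓ → FreePoly g)) :
    Submodule (FreePoly g) (Fin ℓ → FreePoly g) :=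
  sInf { J | I ≤ J ∧ IsLRealStrong L J }

/-- The real radical of `I`: the smallest real left module containing `I`. -/
noncomputable def realRad {g ℓ : ℕ} (I : Submodule (FreePoly g) (Fin ℓ → FreePoly g)) :
    Submodule (FreePoly g) (Fin ℓ → FreePoly g) :=
  sInf { J | I ≤ J ∧ IsRealMod J }

/-- The word `w` as a product of letters in `ℝ⟨x,x*⟩`. -/
noncomputable def fword {g : ℕ} (w : List (Lttr g)) : FreePoly g :=
  (w.map (FreeAlgebra.ι ℝ)).prod

/-- The subspace of polynomials of degree at most `d`. -/
noncomputable def degLE (g d : ℕ) : Submodule ℝ (FreePoly g) :=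
  Submodule.span ℝ { p | ∃ w : List (Lttr g), w.length ≤ d ∧ p = fword w }

/-- The monomial `eᵢ ⊗ w` in `ℝ^{1×ℓ}⟨x,x*⟩`. -/
noncomputable def monoRow {g ℓ : ℕ} (i : Fin ℓ) (w : List (Lttr g)) : Fin ℓ → FreePoly g :=
  fun j => if j = i then fword w else 0

/-- `C` is a right chip space: it is spanned by a set of monomials and is closed
under taking middle chips. -/
def IsChipSpace {g ℓ : ℕ} (C : Submodule ℝ (Fin ℓ → FreePoly g)) : Prop :=
  (∃ S : Set (Fin ℓ × List (Lttr g)),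
      C = Submodule.span ℝ ((fun m => monoRow m.1 m.2) '' S)) ∧
  ∀ (i : Fin ℓ) (w1 w2 w3 : List (Lttr g)),
    monoRow i (w1 ++ w2 ++ w3) ∈ C → monoRow i w3 ∈ C → monoRow i (w2 ++ w3) ∈ C

/-- `C` is full: it contains every right chip of each of its monomials. -/
def IsFullChip {g ℓ : ℕ} (C : Submodule ℝ (Fin ℓ → FreePoly g)) : Prop :=
  ∀ (i : Fin ℓ) (w1 w2 : List (Lttr g)), monoRow i (w1 ++ w2) ∈ C → monoRow i w2 ∈ C

/-- The subspace `ℝ⟨x,x*⟩_d C`: the span of all products `q • c` with `deg q ≤ d`, `c ∈ C`. -/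
noncomputable def degC {g ℓ : ℕ} (d : ℕ) (C : Submodule ℝ (Fin ℓ → FreePoly g)) :
    Submodule ℝ (Fin ℓ → FreePoly g) :=
  Submodule.span ℝ { v | ∃ q ∈ degLE g d, ∃ c ∈ C, v = fun j => q * c j }

/-- The subspace `C*ℝ⟨x,x*⟩₁C` of `ℓ × ℓ` matrix polynomials. -/
noncomputable def sandC {g ℓ : ℕ} (C : Submodule ℝ (Fin ℓ → FreePoly g)) :
    Submodule ℝ (Matrix (Fin ℓ) (Fin ℓ) (FreePoly g)) :=
  Submodule.span ℝ
    { m | ∃ a ∈ C, ∃ b ∈ C, ∃ q ∈ degLE g 1,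
        m = fun u v => pstar (a u) * q * b v }

/-- `I` is an `(L,C)`-real left module. -/
def IsLCReal {g ν ℓ : ℕ} (L : Matrix (Fin ν) (Fin ν) (FreePoly g))
    (C : Submodule ℝ (Fin ℓ → FreePoly g))
    (I : Submodule (FreePoly g) (Fin ℓ → FreePoly g)) : Prop :=
  ∀ (a b : ℕ) (p : Fin a → (Fin ℓ → FreePoly g))
    (q : Fin b → Matrix (Fin ν) (Fin ℓ) (FreePoly g)),
    (∀ i, p i ∈ C) → (∀ j, rowsInR C (q j)) →
    ((∑ i, sqForm (p i)) + ∑ j, quadForm L (q j)) ∈ modPlusStar I →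
    (∀ i, p i ∈ I) ∧ ∀ j, rowsInM I (L * q j)

/-- `I` is a strongly `(L,C)`-real left module. -/
def IsLCRealStrong {g ν ℓ : ℕ} (L : Matrix (Fin ν) (Fin ν) (FreePoly g))
    (C : Submodule ℝ (Fin ℓ → FreePoly g))
    (I : Submodule (FreePoly g) (Fin ℓ → FreePoly g)) : Prop :=
  ∀ (a b : ℕ) (p : Fin a → (Fin ℓ → FreePoly g))
    (q : Fin b → Matrix (Fin ν) (Fin ℓ) (FreePoly g)),
    (∀ i, p i ∈ C) → (∀ j, rowsInR C (q j)) →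
    ((∑ i, sqForm (p i)) + ∑ j, quadForm L (q j)) ∈ modPlusStar I →
    (∀ i, p i ∈ I) ∧ ∀ j, rowsInM I (q j)

/-- The `(L,C)`-real radical of `I`. -/
noncomputable def LCrad {g ν ℓ : ℕ} (L : Matrix (Fin ν) (Fin ν) (FreePoly g))
    (C : Submodule ℝ (Fin ℓ → FreePoly g))
    (I : Submodule (FreePoly g) (Fin ℓ → FreePoly g)) :
    Submodule (FreePoly g) (Fin ℓ → FreePoly g) :=
  sInf { J | I ≤ J ∧ IsLCReal L C J }

/-- The strong `(L,C)`-real radical of `I`. -/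
noncomputable def LCradStrong {g ν ℓ : ℕ} (L : Matrix (Fin ν) (Fin ν) (FreePoly g))
    (C : Submodule ℝ (Fin ℓ → FreePoly g))
    (I : Submodule (FreePoly g) (Fin ℓ → FreePoly g)) :
    Submodule (FreePoly g) (Fin ℓ → FreePoly g) :=
  sInf { J | I ≤ J ∧ IsLCRealStrong L C J }

/-- The constant term of a noncommutative polynomial. -/
noncomputable def constTerm (g : ℕ) : FreePoly g →ₐ[ℝ] ℝ :=
  FreeAlgebra.lift ℝ (fun _ : Lttr g => (0 : ℝ))

/-- `L` is a linear pencil: symmetric, with entries of degree at most `1`. -/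
def IsPencil {g ν : ℕ} (L : Matrix (Fin ν) (Fin ν) (FreePoly g)) : Prop :=
  starM L = L ∧ ∀ i j, L i j ∈ degLE g 1

/-- `L` is monic: its constant term is the identity matrix. -/
def IsMonic {g ν : ℕ} (L : Matrix (Fin ν) (Fin ν) (FreePoly g)) : Prop :=
  ∀ i j, constTerm g (L i j) = if i = j then 1 else 0

/-- A real matrix viewed as a constant matrix polynomial. -/
noncomputable def constM {g a b : ℕ} (A : Matrix (Fin a) (Fin b) ℝ) :
    Matrix (Fin a) (Fin b) (FreePoly g) :=
  A.map (algebraMap ℝ (FreePoly g))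

/-- `(X, v) ∈ V(I)`: every element of `I` kills `v` at `X`. -/
def inV {g ℓ n : ℕ} (I : Submodule (FreePoly g) (Fin ℓ → FreePoly g))
    (X : Fin g → Matrix (Fin n) (Fin n) ℝ) (v : Fin ℓ × Fin n → ℝ) : Prop :=
  ∀ p ∈ I, (evalRow X p).mulVec v = 0

/-!
Evaluate the certificate `∑ pᵢ*pᵢ + ∑ qⱼ*Lqⱼ = u + w*` at `X` and pair it with `v` on both
sides. Every row of `u` and `w` kills `v` at `X`, so the right-hand side gives `0`, while the
left-hand side is `∑ ‖pᵢ(X)v‖² + ∑ ⟨qⱼ(X)v, L(X) qⱼ(X)v⟩`, a sum of nonnegative terms. Hence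
`pᵢ(X)v = 0` and `⟨qⱼ(X)v, L(X) qⱼ(X)v⟩ = 0`; the latter forces `L(X) qⱼ(X)v = 0` when
`L(X) ⪰ 0`, and `qⱼ(X)v = 0` when `L(X) ≻ 0`.
-/

section Evaluation

variable {g n : ℕ} (X : Fin g → Matrix (Fin n) (Fin n) ℝ)

theorem evalP_pstar (p : FreePoly g) : evalP X (pstar p) = (evalP X p)ᵀ := by
  have h : (AlgHom.op (evalP X)).comp
        (FreeAlgebra.lift ℝ fun l : Lttr g => MulOpposite.op (FreeAlgebra.ι ℝ (Sum.swap l))) =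
      (transposeAlgEquiv (Fin n) ℝ ℝ).toAlgHom.comp (evalP X) := by
    ext (i | i) <;> simp [evalP]
  simpa [pstar] using congrArg MulOpposite.unop (DFunLike.congr_fun h p)

theorem evalM_mul {a b c : ℕ} (A : Matrix (Fin a) (Fin b) (FreePoly g))
    (B : Matrix (Fin b) (Fin c) (FreePoly g)) :
    evalM X (A * B) = evalM X A * evalM X B := by
  ext ⟨i, r⟩ ⟨j, s⟩
  simp only [evalM, mul_apply, map_sum, _root_.map_mul, Matrix.sum_apply, Fintype.sum_prod_type]

theorem evalM_starM {a b : ℕ} (A : Matrix (Fin a) (Fin b) (FreePoly g)) :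
    evalM X (starM A) = (evalM X A)ᵀ := by
  ext ⟨i, r⟩ ⟨j, s⟩
  simp [evalM, starM, evalP_pstar]

theorem evalM_add {a b : ℕ} (A B : Matrix (Fin a) (Fin b) (FreePoly g)) :
    evalM X (A + B) = evalM X A + evalM X B := by
  ext ⟨i, r⟩ ⟨j, s⟩
  simp [evalM]

theorem evalM_sum {a b : ℕ} {ι : Type*} (s : Finset ι)
    (f : ι → Matrix (Fin a) (Fin b) (FreePoly g)) :
    evalM X (∑ i ∈ s, f i) = ∑ i ∈ s, evalM X (f i) := by
  ext ⟨i, r⟩ ⟨j, t⟩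
  simp [evalM, Matrix.sum_apply]

theorem evalM_sqForm {ℓ : ℕ} (p : Fin ℓ → FreePoly g) :
    evalM X (sqForm p) = (evalRow X p)ᵀ * evalRow X p := by
  ext ⟨i, r⟩ ⟨j, s⟩
  simp [evalM, sqForm, evalRow, mul_apply, evalP_pstar]

theorem evalM_mulVec_apply {a ℓ : ℕ} (m : Matrix (Fin a) (Fin ℓ) (FreePoly g))
    (v : Fin ℓ × Fin n → ℝ) (i : Fin a) (r : Fin n) :
    (evalM X m *ᵥ v) (i, r) = (evalRow X (m i) *ᵥ v) r := rfl

theorem evalM_mulVec_eq_zero_iff {a ℓ : ℕ} (m : Matrix (Fin a) (Fin ℓ) (FreePoly g))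
    (v : Fin ℓ × Fin n → ℝ) :
    evalM X m *ᵥ v = 0 ↔ ∀ i, evalRow X (m i) *ᵥ v = 0 := by
  simp only [funext_iff, Prod.forall, evalM_mulVec_apply, Pi.zero_apply]

end Evaluation

section Pairing

variable {g n ℓ : ℕ} (X : Fin g → Matrix (Fin n) (Fin n) ℝ) (v : Fin ℓ × Fin n → ℝ)

theorem dotProduct_evalM_sqForm (p : Fin ℓ → FreePoly g) :
    v ⬝ᵥ evalM X (sqForm p) *ᵥ v = (evalRow X p *ᵥ v) ⬝ᵥ (evalRow X p *ᵥ v) := by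
  rw [evalM_sqForm, ← mulVec_mulVec, dotProduct_mulVec, vecMul_transpose]

theorem dotProduct_evalM_quadForm {ν : ℕ} (L : Matrix (Fin ν) (Fin ν) (FreePoly g))
    (q : Matrix (Fin ν) (Fin ℓ) (FreePoly g)) :
    v ⬝ᵥ evalM X (quadForm L q) *ᵥ v =
      (evalM X q *ᵥ v) ⬝ᵥ evalM X L *ᵥ (evalM X q *ᵥ v) := by
  rw [quadForm, evalM_mul, evalM_mul, evalM_starM, ← mulVec_mulVec, ← mulVec_mulVec,
    dotProduct_mulVec, vecMul_transpose]

theorem dotProduct_evalM_eq_zero_of_mem_modPlusStar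
    {I : Submodule (FreePoly g) (Fin ℓ → FreePoly g)} (hI : inV I X v)
    {M : Matrix (Fin ℓ) (Fin ℓ) (FreePoly g)} (hM : M ∈ modPlusStar I) :
    v ⬝ᵥ evalM X M *ᵥ v = 0 := by
  obtain ⟨u, w, hu, hw, rfl⟩ := hM
  have hu0 : evalM X u *ᵥ v = 0 := (evalM_mulVec_eq_zero_iff X u v).2 fun i => hI _ (hu i)
  have hw0 : evalM X w *ᵥ v = 0 := (evalM_mulVec_eq_zero_iff X w v).2 fun i => hI _ (hw i)
  rw [evalM_add, evalM_starM, add_mulVec, dotProduct_add, hu0, dotProduct_mulVec,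
    vecMul_transpose, hw0, dotProduct_zero, zero_dotProduct, add_zero]

theorem evalRow_mulVec_eq_zero_and_dotProduct_eq_zero_of_mem_modPlusStar {ν a b : ℕ}
    {L : Matrix (Fin ν) (Fin ν) (FreePoly g)} (hX : (evalM X L).PosSemidef)
    {I : Submodule (FreePoly g) (Fin ℓ → FreePoly g)} (hI : inV I X v)
    (p : Fin a → (Fin ℓ → FreePoly g)) (q : Fin b → Matrix (Fin ν) (Fin ℓ) (FreePoly g))
    (hmem : ((∑ i, sqForm (p i)) + ∑ j, quadForm L (q j)) ∈ modPlusStar I) :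
    (∀ i, evalRow X (p i) *ᵥ v = 0) ∧
      ∀ j, (evalM X (q j) *ᵥ v) ⬝ᵥ evalM X L *ᵥ (evalM X (q j) *ᵥ v) = 0 := by
  have hsq_nonneg : ∀ i, 0 ≤ v ⬝ᵥ evalM X (sqForm (p i)) *ᵥ v := fun i => by
    rw [dotProduct_evalM_sqForm]
    exact dotProduct_self_star_nonneg _
  have hquad_nonneg : ∀ j, 0 ≤ v ⬝ᵥ evalM X (quadForm L (q j)) *ᵥ v := fun j => by
    simpa [dotProduct_evalM_quadForm] using hX.dotProduct_mulVec_nonneg (evalM X (q j) *ᵥ v)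
  have htotal := dotProduct_evalM_eq_zero_of_mem_modPlusStar X v hI hmem
  simp only [evalM_add, evalM_sum, add_mulVec, sum_mulVec, dotProduct_add, dotProduct_sum]
    at htotal
  obtain ⟨hsq, hquad⟩ := (add_eq_zero_iff_of_nonneg (Finset.sum_nonneg fun i _ => hsq_nonneg i)
    (Finset.sum_nonneg fun j _ => hquad_nonneg j)).1 htotal
  rw [Finset.sum_eq_zero_iff_of_nonneg fun i _ => hsq_nonneg i] at hsq
  rw [Finset.sum_eq_zero_iff_of_nonneg fun j _ => hquad_nonneg j] at hquad
  refine ⟨fun i => ?_, fun j => ?_⟩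
  · exact dotProduct_self_eq_zero.1 <| (dotProduct_evalM_sqForm X v (p i)).symm.trans
      (hsq i (Finset.mem_univ i))
  · exact (dotProduct_evalM_quadForm X v L (q j)).symm.trans (hquad j (Finset.mem_univ j))

theorem rowsInM_of_evalM_mulVec_eq_zero {a : ℕ}
    {J : Submodule (FreePoly g) (Fin ℓ → FreePoly g)}
    (hJ : ∀ r : Fin ℓ → FreePoly g, evalRow X r *ᵥ v = 0 → r ∈ J)
    {m : Matrix (Fin a) (Fin ℓ) (FreePoly g)} (hm : evalM X m *ᵥ v = 0) : rowsInM J m :=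
  fun i => hJ _ ((evalM_mulVec_eq_zero_iff X m v).1 hm i)

end Pairing

theorem point_module_is_LReal_general (g ν ℓ n : ℕ)
    (L : Matrix (Fin ν) (Fin ν) (FreePoly g))
    (X : Fin g → Matrix (Fin n) (Fin n) ℝ) (hX : (evalM X L).PosSemidef) :
    (∀ (v : Fin ℓ × Fin n → ℝ) (J : Submodule (FreePoly g) (Fin ℓ → FreePoly g)),
      (∀ q : Fin ℓ → FreePoly g, q ∈ J ↔ (evalRow X q).mulVec v = 0) →
      IsLReal L J) ∧
    ((evalM X L).PosDef →
      ∀ (v : Fin ℓ × Fin n → ℝ) (J : Submodule (FreePoly g) (Fin ℓ → FreePoly g)),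
        (∀ q : Fin ℓ → FreePoly g, q ∈ J ↔ (evalRow X q).mulVec v = 0) →
        IsLRealStrong L J) := by
  constructor
  · intro v J hJ a b p q hmem
    obtain ⟨hp, hq⟩ := evalRow_mulVec_eq_zero_and_dotProduct_eq_zero_of_mem_modPlusStar X v hX
      (fun r => (hJ r).1) p q hmem
    refine ⟨fun i => (hJ _).2 (hp i), fun j => rowsInM_of_evalM_mulVec_eq_zero X v
      (fun r => (hJ r).2) ?_⟩
    rw [evalM_mul, ← mulVec_mulVec]
    exact (hX.dotProduct_mulVec_zero_iff _).1 (by simpa using hq j)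
  · intro hPD v J hJ a b p q hmem
    obtain ⟨hp, hq⟩ := evalRow_mulVec_eq_zero_and_dotProduct_eq_zero_of_mem_modPlusStar X v hX
      (fun r => (hJ r).1) p q hmem
    refine ⟨fun i => (hJ _).2 (hp i), fun j => rowsInM_of_evalM_mulVec_eq_zero X v
      (fun r => (hJ r).2) ?_⟩
    by_contra hne
    exact (hPD.dotProduct_mulVec_pos hne).ne' (by simpa using hq j)

/-- **The vanishing left module of a single pair `(X,v)` with `L(X) ⪰ 0` is `L`-real;
if `L(X) ≻ 0` it is strongly `L`-real.** -/
theorem point_module_is_LReal (g ν ℓ n : ℕ) (hg : 0 < g)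
    (L : Matrix (Fin ν) (Fin ν) (FreePoly g)) (hLsym : starM L = L)
    (X : Fin g → Matrix (Fin n) (Fin n) ℝ) (hX : (evalM X L).PosSemidef) :
    (∀ (v : Fin ℓ × Fin n → ℝ) (J : Submodule (FreePoly g) (Fin ℓ → FreePoly g)),
      (∀ q : Fin ℓ → FreePoly g, q ∈ J ↔ (evalRow X q).mulVec v = 0) →
      IsLReal L J) ∧
    ((evalM X L).PosDef →
      ∀ (v : Fin ℓ × Fin n → ℝ) (J : Submodule (FreePoly g) (Fin ℓ → FreePoly g)),
        (∀ q : Fin ℓ → FreePoly g, q ∈ J ↔ (evalRow X q).mulVec v = 0) →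
        IsLRealStrong L J) :=
  point_module_is_LReal_general g ν ℓ n L X hX
end

section
/- Let I ⊆ ℝ^{1×ℓ}⟨x,x*⟩ be a homogeneous left module (one generated by homogeneous polynomials), and let L ∈ ℝ^{ν×ν}⟨x,x*⟩ be a monic linear pencil. Then the following are equivalent: (i) I is real; (ii) I is L-real; (iii) I is strongly L-real. -/
open scoped BigOperators
open Matrix

/-- The subspace of homogeneous row vectors of degree `d`. -/
noncomputable def homogRow (g ℓ d : ℕ) : Submodule ℝ (Fin ℓ → FreePoly g) :=
  Submodule.span ℝ { v | ∃ (i : Fin ℓ) (w : List (Lttr g)), w.length = d ∧ v = monoRow i w }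

/-- `I` is a homogeneous left module: generated by homogeneous polynomials. -/
def IsHomogeneousMod {g ℓ : ℕ} (I : Submodule (FreePoly g) (Fin ℓ → FreePoly g)) : Prop :=
  ∃ S : Set (Fin ℓ → FreePoly g),
    (∀ s ∈ S, ∃ d, s ∈ homogRow g ℓ d) ∧ I = Submodule.span (FreePoly g) S


/-!
Only "real ⇒ strongly `L`-real" needs work. Scaling the letters `x ↦ t x` maps a homogeneous
module into itself and turns the monic pencil `L` into `1 + tΛ` with `Λ = L - 1`. Applied to a
relation `∑ pᵢ*pᵢ + ∑ qⱼ*Lqⱼ ∈ ℝ^{ℓ×1}I + I*ℝ^{1×ℓ}`, this yields a polynomial in `t` whose values,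
hence whose coefficients, all lie in that real subspace. If the homogeneous components of degree
`< s` of all `pᵢ` and `qⱼ` already lie in `I`, the coefficient of `t^{2s}` agrees modulo the
subspace with `∑ pᵢ,ₛ*pᵢ,ₛ + ∑ qⱼ,ₛ*qⱼ,ₛ`, so realness of `I` puts the degree-`s` components in `I`.
-/

section Involution

variable {g : ℕ}

@[simp] lemma pstar_ι (l : Lttr g) : pstar (FreeAlgebra.ι ℝ l) = FreeAlgebra.ι ℝ (Sum.swap l) := by
  simp [pstar]

@[simp] lemma pstar_algebraMap (c : ℝ) :
    pstar (algebraMap ℝ (FreePoly g) c) = algebraMap ℝ (FreePoly g) c := by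
  simp [pstar]

@[simp] lemma pstar_mul (x y : FreePoly g) : pstar (x * y) = pstar y * pstar x := by
  simp [pstar]

noncomputable def pstarₗ (g : ℕ) : FreePoly g →ₗ[ℝ] FreePoly g where
  toFun := pstar
  map_add' x y := by simp [pstar]
  map_smul' c x := by simp [pstar]

@[simp] lemma pstar_add (x y : FreePoly g) : pstar (x + y) = pstar x + pstar y :=
  map_add (pstarₗ g) x y

@[simp] lemma pstar_smul (c : ℝ) (x : FreePoly g) : pstar (c • x) = c • pstar x :=
  map_smul (pstarₗ g) c x

@[simp] lemma pstar_zero : pstar (0 : FreePoly g) = 0 := map_zero (pstarₗ g)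

lemma pstar_sum {ι : Type*} (s : Finset ι) (f : ι → FreePoly g) :
    pstar (∑ i ∈ s, f i) = ∑ i ∈ s, pstar (f i) :=
  map_sum (pstarₗ g) f s

@[simp] lemma pstar_pstar (x : FreePoly g) : pstar (pstar x) = x := by
  induction x using FreeAlgebra.induction with
  | grade0 c => simp
  | grade1 l => simp
  | mul x y hx hy => simp [hx, hy]
  | add x y hx hy => simp [hx, hy]

variable {a b c : ℕ}

lemma starM_add (A B : Matrix (Fin a) (Fin b) (FreePoly g)) :
    starM (A + B) = starM A + starM B := by
  ext i j; exact pstar_add _ _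

lemma starM_smul (r : ℝ) (A : Matrix (Fin a) (Fin b) (FreePoly g)) :
    starM (r • A) = r • starM A := by
  ext i j; exact pstar_smul _ _

lemma starM_sum {κ : Type*} (s : Finset κ) (f : κ → Matrix (Fin a) (Fin b) (FreePoly g)) :
    starM (∑ k ∈ s, f k) = ∑ k ∈ s, starM (f k) := by
  ext i j; simp only [starM, Matrix.sum_apply, pstar_sum]

@[simp] lemma starM_starM (A : Matrix (Fin a) (Fin b) (FreePoly g)) : starM (starM A) = A := by
  ext i j; exact pstar_pstar _

lemma starM_mul (A : Matrix (Fin a) (Fin b) (FreePoly g))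
    (B : Matrix (Fin b) (Fin c) (FreePoly g)) :
    starM (A * B) = starM B * starM A := by
  ext i j; simp only [starM, Matrix.mul_apply, pstar_sum, pstar_mul]

end Involution

section Scaling

variable {g : ℕ}

noncomputable def scale (g : ℕ) (t : ℝ) : FreePoly g →ₐ[ℝ] FreePoly g :=
  FreeAlgebra.lift ℝ fun l => t • FreeAlgebra.ι ℝ l

@[simp] lemma scale_ι (t : ℝ) (l : Lttr g) :
    scale g t (FreeAlgebra.ι ℝ l) = t • FreeAlgebra.ι ℝ l := by
  simp [scale]

lemma scale_one : scale g 1 = AlgHom.id ℝ (FreePoly g) :=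
  FreeAlgebra.hom_ext (funext fun l => by simp)

lemma scale_pstar (t : ℝ) (x : FreePoly g) : scale g t (pstar x) = pstar (scale g t x) := by
  induction x using FreeAlgebra.induction with
  | grade0 c => simp
  | grade1 l => simp
  | mul x y hx hy => simp [hx, hy]
  | add x y hx hy => simp [hx, hy]

lemma scale_fword (t : ℝ) (w : List (Lttr g)) : scale g t (fword w) = t ^ w.length • fword w := by
  induction w with
  | nil => simp [fword]
  | cons l w ih =>
    simp only [fword, List.map_cons, List.prod_cons] at ih ⊢
    rw [map_mul, ih, scale_ι, smul_mul_smul_comm, List.length_cons, pow_succ']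

/-- `x ↦ ∑_d x_d T^d`, where `x_d` is the degree-`d` part of `x`. -/
noncomputable def homogenize (g : ℕ) : FreePoly g →ₐ[ℝ] Polynomial (FreePoly g) :=
  FreeAlgebra.lift ℝ fun l => Polynomial.monomial 1 (FreeAlgebra.ι ℝ l)

lemma scale_eq_eval_homogenize (t : ℝ) (x : FreePoly g) :
    scale g t x = (homogenize g x).eval (algebraMap ℝ (FreePoly g) t) := by
  induction x using FreeAlgebra.induction with
  | grade0 c => simp [homogenize]
  | grade1 l => simp [homogenize, Algebra.smul_def, Algebra.commutes]
  | mul x y hx hy =>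
    rw [map_mul, map_mul, hx, hy, Polynomial.eval, Polynomial.eval, Polynomial.eval,
      Polynomial.eval₂_mul_noncomm _ _ fun k => Algebra.commute_algebraMap_right t _]
  | add x y hx hy => simp [hx, hy]

lemma scale_eq_sum_coeff_homogenize {N : ℕ} {x : FreePoly g} (hx : (homogenize g x).natDegree < N)
    (t : ℝ) : scale g t x = ∑ d ∈ Finset.range N, t ^ d • (homogenize g x).coeff d := by
  rw [scale_eq_eval_homogenize, Polynomial.eval_eq_sum_range' hx]
  refine Finset.sum_congr rfl fun d _ => ?_
  rw [← map_pow, ← Algebra.commutes, ← Algebra.smul_def]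

end Scaling

section Homogeneity

variable {g ℓ : ℕ}

lemma scale_homogRow {d : ℕ} {v : Fin ℓ → FreePoly g} (hv : v ∈ homogRow g ℓ d) (t : ℝ) :
    (fun j => scale g t (v j)) = t ^ d • v := by
  induction hv using Submodule.span_induction with
  | mem x hx =>
    obtain ⟨i, w, rfl, rfl⟩ := hx
    ext j
    by_cases h : j = i <;> simp [monoRow, h, scale_fword]
  | zero => ext j; simp
  | add x y _ _ hx hy =>
    ext j
    have := congrFun hx j
    have := congrFun hy j
    simp_all [smul_add]
  | smul c x _ hx =>
    ext j
    have := congrFun hx j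
    simp_all [smul_comm c]

lemma IsHomogeneousMod.scale_mem {I : Submodule (FreePoly g) (Fin ℓ → FreePoly g)}
    (hI : IsHomogeneousMod I) (t : ℝ) {r : Fin ℓ → FreePoly g} (hr : r ∈ I) :
    (fun j => scale g t (r j)) ∈ I := by
  obtain ⟨S, hS, rfl⟩ := hI
  induction hr using Submodule.span_induction with
  | mem x hx =>
    obtain ⟨d, hd⟩ := hS x hx
    rw [scale_homogRow hd t]
    exact Submodule.smul_of_tower_mem _ _ (Submodule.subset_span hx)
  | zero =>
    simp only [Pi.zero_apply, map_zero]
    exact Submodule.zero_mem _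
  | add x y _ _ hx hy =>
    simp only [Pi.add_apply, map_add]
    exact Submodule.add_mem _ hx hy
  | smul c x _ hx =>
    simp only [Pi.smul_apply, smul_eq_mul, map_mul]
    exact Submodule.smul_mem _ (scale g t c) hx

lemma scale_of_mem_degLE_one {x : FreePoly g} (hx : x ∈ degLE g 1) (t : ℝ) :
    scale g t x = algebraMap ℝ (FreePoly g) (constTerm g x)
      + t • (x - algebraMap ℝ (FreePoly g) (constTerm g x)) := by
  induction hx using Submodule.span_induction with
  | mem p hp =>
    obtain ⟨w, hw, rfl⟩ := hp
    match w, hw with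
    | [], _ => simp [fword]
    | [l], _ => simp [fword, constTerm]
  | zero => simp
  | add x y _ _ hx hy =>
    rw [map_add, hx, hy, map_add, map_add]
    module
  | smul c x _ hx =>
    rw [map_smul, hx, map_smul, smul_eq_mul, map_mul, ← Algebra.smul_def]
    module

lemma IsPencil.map_scale {ν : ℕ} {L : Matrix (Fin ν) (Fin ν) (FreePoly g)} (hL : IsPencil L)
    (hmon : IsMonic L) (t : ℝ) : L.map (scale g t) = 1 + t • (L - 1) := by
  ext i j
  rw [Matrix.map_apply, scale_of_mem_degLE_one (hL.2 i j), hmon i j]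
  by_cases h : i = j <;> simp [h]

end Homogeneity

section MatrixScaling

variable {g a b c : ℕ}

lemma map_scale_mul (t : ℝ) (A : Matrix (Fin a) (Fin b) (FreePoly g))
    (B : Matrix (Fin b) (Fin c) (FreePoly g)) :
    (A * B).map (scale g t) = A.map (scale g t) * B.map (scale g t) :=
  Matrix.map_mul (f := (scale g t).toRingHom)

lemma starM_map_scale (t : ℝ) (A : Matrix (Fin a) (Fin b) (FreePoly g)) :
    (starM A).map (scale g t) = starM (A.map (scale g t)) := by
  ext i j; exact scale_pstar t _

noncomputable def homogComp (d : ℕ) (A : Matrix (Fin a) (Fin b) (FreePoly g)) :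
    Matrix (Fin a) (Fin b) (FreePoly g) :=
  A.map fun x => (homogenize g x).coeff d

lemma map_scale_eq_sum_homogComp {N : ℕ} {A : Matrix (Fin a) (Fin b) (FreePoly g)}
    (hN : ∀ i j, (homogenize g (A i j)).natDegree < N) (t : ℝ) :
    A.map (scale g t) = ∑ d ∈ Finset.range N, t ^ d • homogComp d A := by
  ext i j
  simp [Matrix.sum_apply, homogComp, scale_eq_sum_coeff_homogenize (hN i j)]

lemma eq_sum_homogComp {N : ℕ} {A : Matrix (Fin a) (Fin b) (FreePoly g)}
    (hN : ∀ i j, (homogenize g (A i j)).natDegree < N) :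
    A = ∑ d ∈ Finset.range N, homogComp d A := by
  simpa [scale_one] using map_scale_eq_sum_homogComp hN 1

lemma exists_natDegree_homogenize_lt (A : Fin c → Matrix (Fin a) (Fin b) (FreePoly g)) :
    ∃ N, ∀ k i j, (homogenize g (A k i j)).natDegree < N := by
  obtain ⟨M, hM⟩ := Finite.exists_le fun x : Fin c × Fin a × Fin b =>
    (homogenize g (A x.1 x.2.1 x.2.2)).natDegree
  exact ⟨M + 1, fun k i j => Nat.lt_succ_of_le (hM (k, i, j))⟩

end MatrixScaling

section ModPlusStar

variable {g ℓ : ℕ} {I : Submodule (FreePoly g) (Fin ℓ → FreePoly g)}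

lemma rowsInM_zero {a : ℕ} : rowsInM I (0 : Matrix (Fin a) (Fin ℓ) (FreePoly g)) :=
  fun _ => I.zero_mem

lemma rowsInM_mul {a b : ℕ} (X : Matrix (Fin a) (Fin b) (FreePoly g))
    {Q : Matrix (Fin b) (Fin ℓ) (FreePoly g)} (hQ : rowsInM I Q) : rowsInM I (X * Q) := by
  intro i
  have : (X * Q) i = ∑ k, X i k • Q k := by ext j; simp [Matrix.mul_apply]
  rw [this]
  exact I.sum_mem fun k _ => I.smul_mem _ (hQ k)

noncomputable def modPlusStarSubmodule (I : Submodule (FreePoly g) (Fin ℓ → FreePoly g)) :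
    Submodule ℝ (Matrix (Fin ℓ) (Fin ℓ) (FreePoly g)) where
  carrier := modPlusStar I
  add_mem' := by
    rintro _ _ ⟨u, v, hu, hv, rfl⟩ ⟨u', v', hu', hv', rfl⟩
    refine ⟨u + u', v + v', fun i => I.add_mem (hu i) (hu' i),
      fun i => I.add_mem (hv i) (hv' i), ?_⟩
    rw [starM_add]
    abel
  zero_mem' := ⟨0, 0, rowsInM_zero, rowsInM_zero, by ext; simp [starM]⟩
  smul_mem' := by
    rintro c _ ⟨u, v, hu, hv, rfl⟩
    exact ⟨c • u, c • v, fun i => I.smul_of_tower_mem c (hu i),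
      fun i => I.smul_of_tower_mem c (hv i), by rw [starM_smul, smul_add]⟩

@[simp] lemma mem_modPlusStarSubmodule {m : Matrix (Fin ℓ) (Fin ℓ) (FreePoly g)} :
    m ∈ modPlusStarSubmodule I ↔ m ∈ modPlusStar I := Iff.rfl

lemma mem_modPlusStar_of_rowsInM {u : Matrix (Fin ℓ) (Fin ℓ) (FreePoly g)} (hu : rowsInM I u) :
    u ∈ modPlusStarSubmodule I :=
  ⟨u, 0, hu, rowsInM_zero, by ext; simp [starM]⟩

lemma starM_mem_modPlusStar_of_rowsInM {v : Matrix (Fin ℓ) (Fin ℓ) (FreePoly g)}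
    (hv : rowsInM I v) : starM v ∈ modPlusStarSubmodule I :=
  ⟨0, v, rowsInM_zero, hv, by rw [zero_add]⟩

lemma IsHomogeneousMod.map_scale_mem_modPlusStar (hI : IsHomogeneousMod I) (t : ℝ)
    {m : Matrix (Fin ℓ) (Fin ℓ) (FreePoly g)} (hm : m ∈ modPlusStar I) :
    m.map (scale g t) ∈ modPlusStarSubmodule I := by
  obtain ⟨u, v, hu, hv, rfl⟩ := hm
  refine ⟨u.map (scale g t), v.map (scale g t), fun i => hI.scale_mem t (hu i),
    fun i => hI.scale_mem t (hv i), ?_⟩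
  rw [Matrix.map_add _ (map_add _), starM_map_scale]

variable {ν : ℕ}

lemma starM_mul_mul_mem_of_rowsInM_right {P Q : Matrix (Fin ν) (Fin ℓ) (FreePoly g)}
    (M : Matrix (Fin ν) (Fin ν) (FreePoly g)) (hQ : rowsInM I Q) :
    starM P * M * Q ∈ modPlusStarSubmodule I :=
  mem_modPlusStar_of_rowsInM (rowsInM_mul _ hQ)

lemma starM_mul_mul_mem_of_rowsInM_left {P Q : Matrix (Fin ν) (Fin ℓ) (FreePoly g)}
    (M : Matrix (Fin ν) (Fin ν) (FreePoly g)) (hP : rowsInM I P) :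
    starM P * M * Q ∈ modPlusStarSubmodule I := by
  have h := starM_mem_modPlusStar_of_rowsInM (rowsInM_mul (starM Q * starM M) hP)
  rwa [starM_mul, starM_mul, starM_starM, starM_starM, ← Matrix.mul_assoc] at h

lemma quadForm_one (q : Matrix (Fin ν) (Fin ℓ) (FreePoly g)) :
    quadForm 1 q = ∑ k, sqForm (q k) := by
  ext u v
  simp [quadForm, starM, sqForm, Matrix.mul_apply, Matrix.sum_apply]

lemma quadForm_one_replicateRow (p : Fin ℓ → FreePoly g) :
    quadForm (1 : Matrix (Fin 1) (Fin 1) (FreePoly g)) (Matrix.replicateRow (Fin 1) p)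
      = sqForm p := by
  rw [quadForm_one, Fin.sum_univ_one]
  rfl

end ModPlusStar

section GradedGram

variable {g ℓ ν b : ℕ}

lemma starM_sum_pow_smul_mul_mul (N : ℕ) (t : ℝ) (M : Matrix (Fin ν) (Fin ν) (FreePoly g))
    (X : ℕ → Matrix (Fin ν) (Fin ℓ) (FreePoly g)) :
    starM (∑ u ∈ Finset.range N, t ^ u • X u) * M * ∑ v ∈ Finset.range N, t ^ v • X v
      = ∑ x ∈ Finset.range N ×ˢ Finset.range N,
          t ^ (x.1 + x.2) • (starM (X x.1) * M * X x.2) := by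
  rw [starM_sum, Matrix.sum_mul, Matrix.sum_mul, Finset.sum_product]
  refine Finset.sum_congr rfl fun u _ => ?_
  rw [Matrix.mul_sum]
  refine Finset.sum_congr rfl fun v _ => ?_
  rw [starM_smul, Matrix.smul_mul, Matrix.smul_mul, Matrix.mul_smul, smul_smul, pow_add]

noncomputable def gramComp (M : Matrix (Fin ν) (Fin ν) (FreePoly g))
    (Q : Fin b → Matrix (Fin ν) (Fin ℓ) (FreePoly g)) (u v : ℕ) :
    Matrix (Fin ℓ) (Fin ℓ) (FreePoly g) :=
  ∑ j, starM (homogComp u (Q j)) * M * homogComp v (Q j)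

lemma gramComp_diag (M : Matrix (Fin ν) (Fin ν) (FreePoly g))
    (Q : Fin b → Matrix (Fin ν) (Fin ℓ) (FreePoly g)) (u : ℕ) :
    gramComp M Q u u = ∑ j, quadForm M (homogComp u (Q j)) := rfl

lemma map_scale_sum_quadForm {N : ℕ} {t : ℝ} {M Λ : Matrix (Fin ν) (Fin ν) (FreePoly g)}
    (hM : M.map (scale g t) = 1 + t • Λ) {Q : Fin b → Matrix (Fin ν) (Fin ℓ) (FreePoly g)}
    (hQ : ∀ j k l, (homogenize g (Q j k l)).natDegree < N) :
    (∑ j, quadForm M (Q j)).map (scale g t)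
      = ∑ x ∈ Finset.range N ×ˢ Finset.range N,
          (t ^ (x.1 + x.2) • gramComp 1 Q x.1 x.2
            + t ^ (x.1 + x.2 + 1) • gramComp Λ Q x.1 x.2) := by
  have hsum : (∑ j, quadForm M (Q j)).map (scale g t)
      = ∑ j, (quadForm M (Q j)).map (scale g t) := by
    ext k l; simp [Matrix.sum_apply]
  rw [hsum]
  simp only [quadForm, map_scale_mul, starM_map_scale, hM, map_scale_eq_sum_homogComp (hQ _),
    Matrix.mul_add, Matrix.add_mul, Matrix.mul_smul, Matrix.smul_mul, starM_sum_pow_smul_mul_mul,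
    Finset.smul_sum, smul_smul, ← pow_succ', ← Finset.sum_add_distrib]
  rw [Finset.sum_comm]
  simp only [Finset.sum_add_distrib, gramComp, Finset.smul_sum]

lemma gramComp_mem {I : Submodule (FreePoly g) (Fin ℓ → FreePoly g)}
    (M : Matrix (Fin ν) (Fin ν) (FreePoly g)) {Q : Fin b → Matrix (Fin ν) (Fin ℓ) (FreePoly g)}
    {u v : ℕ} (h : (∀ j, rowsInM I (homogComp u (Q j))) ∨ ∀ j, rowsInM I (homogComp v (Q j))) :
    gramComp M Q u v ∈ modPlusStarSubmodule I := by
  refine Submodule.sum_mem _ fun j _ => ?_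
  rcases h with hu | hv
  · exact starM_mul_mul_mem_of_rowsInM_left M (hu j)
  · exact starM_mul_mul_mem_of_rowsInM_right M (hv j)

end GradedGram

lemma diag_mem_of_forall_sum_pow_smul_mem {V : Type*} [AddCommGroup V] [Module ℝ V]
    (W : Submodule ℝ V) {N s : ℕ} (hs : s < N) {A B : ℕ → ℕ → V}
    (hA : ∀ u v, u < s ∨ v < s → A u v ∈ W) (hB : ∀ u v, u < s ∨ v < s → B u v ∈ W)
    (hF : ∀ t : ℝ, ∑ x ∈ Finset.range N ×ˢ Finset.range N,
      (t ^ (x.1 + x.2) • A x.1 x.2 + t ^ (x.1 + x.2 + 1) • B x.1 x.2) ∈ W) :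
    A s s ∈ W := by
  rw [← Submodule.Quotient.mk_eq_zero, ← Module.forall_dual_apply_eq_zero_iff ℝ]
  intro f
  set φ : V →ₗ[ℝ] ℝ := f ∘ₗ W.mkQ
  have hφ : ∀ m ∈ W, φ m = 0 := fun m hm => by
    simp [φ, (Submodule.Quotient.mk_eq_zero W).2 hm]
  -- `φ` of the sum is a polynomial function of `t` vanishing identically; its coefficient of
  -- `t ^ (2 s)` is `φ (A s s)`, since every other block with a nonzero image has degree > `2 s`.
  let P : Polynomial ℝ := ∑ x ∈ Finset.range N ×ˢ Finset.range N,
    (Polynomial.monomial (x.1 + x.2) (φ (A x.1 x.2))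
      + Polynomial.monomial (x.1 + x.2 + 1) (φ (B x.1 x.2)))
  have hP : P = 0 := Polynomial.funext fun t => by
    have := hφ _ (hF t)
    simp only [map_sum, map_add, map_smul, smul_eq_mul] at this
    simpa [P, Polynomial.eval_finsetSum, mul_comm] using this
  have hcoeff : P.coeff (2 * s) = φ (A s s) := by
    simp only [P, Polynomial.finsetSum_coeff, Polynomial.coeff_add, Polynomial.coeff_monomial]
    rw [Finset.sum_eq_single (s, s)]
    · simp [two_mul]
    · rintro ⟨u, v⟩ _ hne
      by_cases h : u < s ∨ v < s
      · simp [hφ _ (hA u v h), hφ _ (hB u v h)]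
      · have h2 : u + v ≠ 2 * s := fun huv => hne (Prod.ext (by simp; omega) (by simp; omega))
        have h3 : u + v + 1 ≠ 2 * s := by omega
        simp [h2, h3]
    · intro h; exact absurd (Finset.mem_product.2 ⟨Finset.mem_range.2 hs, Finset.mem_range.2 hs⟩) h
  rw [hP] at hcoeff
  simpa [φ] using hcoeff.symm

section Reality

variable {g ν ℓ : ℕ} {I : Submodule (FreePoly g) (Fin ℓ → FreePoly g)}
  {L : Matrix (Fin ν) (Fin ν) (FreePoly g)}

lemma IsLReal.mem_of_sum_sqForm_mem (h : IsLReal L I) {ι : Type*} [Fintype ι]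
    (r : ι → Fin ℓ → FreePoly g) (hr : ∑ k, sqForm (r k) ∈ modPlusStar I) (k : ι) : r k ∈ I := by
  let e := Fintype.equivFin ι
  have hr' : ∑ i, sqForm (r (e.symm i))
      + ∑ j : Fin 0, quadForm L ((fun _ => 0) j : Matrix (Fin ν) (Fin ℓ) (FreePoly g))
      ∈ modPlusStar I := by
    rwa [Fin.sum_univ_zero, add_zero, Equiv.sum_comp e.symm fun i => sqForm (r i)]
  simpa using (h _ 0 _ _ hr').1 (e k)

lemma IsLRealStrong.isLReal (h : IsLRealStrong L I) : IsLReal L I := fun a b p q hm =>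
  ⟨(h a b p q hm).1, fun j => rowsInM_mul L ((h a b p q hm).2 j)⟩

lemma IsLReal.isLReal_one (h : IsLReal L I) :
    IsLReal (1 : Matrix (Fin 1) (Fin 1) (FreePoly g)) I := by
  intro a b p q hm
  simp only [quadForm_one, Fin.sum_univ_one] at hm
  have hmem := h.mem_of_sum_sqForm_mem (Sum.elim p fun j => q j 0)
    (by rwa [Fintype.sum_sum_type])
  refine ⟨fun i => hmem (Sum.inl i), fun j k => ?_⟩
  rw [Matrix.one_mul, Subsingleton.elim k 0]
  exact hmem (Sum.inr j)

lemma rowsInM_of_forall_homogComp {a N : ℕ} {A : Matrix (Fin a) (Fin ℓ) (FreePoly g)}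
    (hN : ∀ i j, (homogenize g (A i j)).natDegree < N)
    (h : ∀ s < N, rowsInM I (homogComp s A)) : rowsInM I A := by
  intro i
  have hA : A i = ∑ s ∈ Finset.range N, homogComp s A i := by
    ext j
    conv_lhs => rw [eq_sum_homogComp hN]
    simp [Matrix.sum_apply]
  rw [hA]
  exact I.sum_mem fun s hs => h s (Finset.mem_range.1 hs) i

lemma rowsInM_homogComp_of_sum_quadForm_mem (hI : IsHomogeneousMod I)
    (hreal : IsLReal (1 : Matrix (Fin 1) (Fin 1) (FreePoly g)) I) {μ a b N : ℕ}
    {M₁ Λ₁ : Matrix (Fin μ) (Fin μ) (FreePoly g)} {M₂ Λ₂ : Matrix (Fin ν) (Fin ν) (FreePoly g)}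
    (hM₁ : ∀ t, M₁.map (scale g t) = 1 + t • Λ₁) (hM₂ : ∀ t, M₂.map (scale g t) = 1 + t • Λ₂)
    {P : Fin a → Matrix (Fin μ) (Fin ℓ) (FreePoly g)}
    {Q : Fin b → Matrix (Fin ν) (Fin ℓ) (FreePoly g)}
    (hP : ∀ i k l, (homogenize g (P i k l)).natDegree < N)
    (hQ : ∀ j k l, (homogenize g (Q j k l)).natDegree < N)
    (hrel : (∑ i, quadForm M₁ (P i)) + ∑ j, quadForm M₂ (Q j) ∈ modPlusStar I) :
    ∀ s < N, (∀ i, rowsInM I (homogComp s (P i))) ∧ ∀ j, rowsInM I (homogComp s (Q j)) := by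
  intro s hs
  induction s using Nat.strong_induction_on with
  | _ s ih =>
  have hlow : ∀ u v, u < s ∨ v < s → ∀ M₁ : Matrix (Fin μ) (Fin μ) (FreePoly g),
      ∀ M₂ : Matrix (Fin ν) (Fin ν) (FreePoly g),
      gramComp M₁ P u v + gramComp M₂ Q u v ∈ modPlusStarSubmodule I := by
    intro u v huv M₁ M₂
    have ih' := fun w (hw : w < s) => ih w hw (by omega)
    refine add_mem (gramComp_mem M₁ ?_) (gramComp_mem M₂ ?_)
    · exact huv.imp (fun hu => (ih' u hu).1) fun hv => (ih' v hv).1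
    · exact huv.imp (fun hu => (ih' u hu).2) fun hv => (ih' v hv).2
  have hdiag := diag_mem_of_forall_sum_pow_smul_mem _ hs
    (fun u v huv => hlow u v huv 1 1) (fun u v huv => hlow u v huv Λ₁ Λ₂) fun t => by
      have h := hI.map_scale_mem_modPlusStar t hrel
      rw [Matrix.map_add _ (map_add _), map_scale_sum_quadForm (hM₁ t) hP,
        map_scale_sum_quadForm (hM₂ t) hQ, ← Finset.sum_add_distrib] at h
      convert h using 2 with x
      simp only [smul_add]
      abel
  rw [gramComp_diag, gramComp_diag] at hdiag
  simp only [quadForm_one] at hdiag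
  have hmem := hreal.mem_of_sum_sqForm_mem
    (Sum.elim (fun x : Fin a × Fin μ => homogComp s (P x.1) x.2)
      fun x : Fin b × Fin ν => homogComp s (Q x.1) x.2)
    (by simpa [Fintype.sum_sum_type, Fintype.sum_prod_type] using hdiag)
  exact ⟨fun i k => hmem (Sum.inl (i, k)), fun j k => hmem (Sum.inr (j, k))⟩

lemma IsLReal.isLRealStrong_of_isHomogeneousMod
    (hreal : IsLReal (1 : Matrix (Fin 1) (Fin 1) (FreePoly g)) I) (hI : IsHomogeneousMod I)
    (hL : IsPencil L) (hmon : IsMonic L) : IsLRealStrong L I := by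
  intro a b p q hrel
  let P : Fin a → Matrix (Fin 1) (Fin ℓ) (FreePoly g) := fun i => Matrix.replicateRow (Fin 1) (p i)
  obtain ⟨N₁, hN₁⟩ := exists_natDegree_homogenize_lt P
  obtain ⟨N₂, hN₂⟩ := exists_natDegree_homogenize_lt q
  have hP : ∀ i k l, (homogenize g (P i k l)).natDegree < max N₁ N₂ :=
    fun i k l => lt_max_of_lt_left (hN₁ i k l)
  have hq : ∀ j k l, (homogenize g (q j k l)).natDegree < max N₁ N₂ :=
    fun j k l => lt_max_of_lt_right (hN₂ j k l)
  have hcomp := rowsInM_homogComp_of_sum_quadForm_mem hI hreal (μ := 1) (M₁ := 1) (Λ₁ := 0)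
    (fun t => by simp) (hL.map_scale hmon) hP hq
    (by simpa only [P, quadForm_one_replicateRow] using hrel)
  exact ⟨fun i => rowsInM_of_forall_homogComp (hP i) (fun s hs => (hcomp s hs).1 i) 0,
    fun j => rowsInM_of_forall_homogComp (hq j) fun s hs => (hcomp s hs).2 j⟩

end Reality

theorem homogeneous_real_iff_LReal_general (g ν ℓ : ℕ)
    (I : Submodule (FreePoly g) (Fin ℓ → FreePoly g)) (hI : IsHomogeneousMod I)
    (L : Matrix (Fin ν) (Fin ν) (FreePoly g)) (hL : IsPencil L) (hLmonic : IsMonic L) :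
    (IsLReal (1 : Matrix (Fin 1) (Fin 1) (FreePoly g)) I ↔ IsLReal L I) ∧
    (IsLReal L I ↔ IsLRealStrong L I) := by
  have real_strong := fun h : IsLReal (1 : Matrix (Fin 1) (Fin 1) (FreePoly g)) I =>
    h.isLRealStrong_of_isHomogeneousMod hI hL hLmonic
  exact ⟨⟨fun h => (real_strong h).isLReal, IsLReal.isLReal_one⟩,
    ⟨fun h => real_strong h.isLReal_one, IsLRealStrong.isLReal⟩⟩

/-- **For a homogeneous left module and a monic pencil, real, `L`-real and strongly
`L`-real coincide.** -/
theorem homogeneous_real_iff_LReal (g ν ℓ : ℕ) (hg : 0 < g)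
    (I : Submodule (FreePoly g) (Fin ℓ → FreePoly g)) (hI : IsHomogeneousMod I)
    (L : Matrix (Fin ν) (Fin ν) (FreePoly g)) (hL : IsPencil L) (hLmonic : IsMonic L) :
    (IsLReal (1 : Matrix (Fin 1) (Fin 1) (FreePoly g)) I ↔ IsLReal L I) ∧
    (IsLReal L I ↔ IsLRealStrong L I) :=
  homogeneous_real_iff_LReal_general g ν ℓ I hI L hL hLmonic
end

section
/- Let C ⊆ ℝ^{1×ℓ}⟨x,x*⟩ be a finite right chip space, let I ⊆ ℝ^{1×ℓ}⟨x,x*⟩ be a left module, and let L = L* ∈ ℝ^{ν×ν}⟨x,x*⟩ be a symmetric polynomial of degree σ. Then the (L,C)-real radical √[(L,C)]I is generated as a left module by I together with some set of polynomials lying in ℝ⟨x,x*⟩_σ C, and the strong (L,C)-real radical of I is generated as a left module by I together with some set of polynomials lying in C. -/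
open scoped BigOperators
open Matrix

lemma modPlusStar_mono' {g ℓ : ℕ} {I J : Submodule (FreePoly g) (Fin ℓ → FreePoly g)}
    (h : I ≤ J) : modPlusStar I ⊆ modPlusStar J := by
  rintro m ⟨u, v, hu, hv, rfl⟩
  exact ⟨u, v, fun i => h (hu i), fun i => h (hv i), rfl⟩

lemma one_mem_degLE' (g d : ℕ) : (1 : FreePoly g) ∈ degLE g d :=
  Submodule.subset_span ⟨[], by simp, by simp [fword]⟩

lemma C_le_degC' {g ℓ : ℕ} (d : ℕ) (C : Submodule ℝ (Fin ℓ → FreePoly g)) :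
    ∀ c ∈ C, c ∈ degC d C := fun c hc =>
  Submodule.subset_span ⟨1, one_mem_degLE' g d, c, hc, funext fun b => (one_mul _).symm⟩

lemma LCrad_isReal' {g ν ℓ : ℕ} (L : Matrix (Fin ν) (Fin ν) (FreePoly g))
    (C : Submodule ℝ (Fin ℓ → FreePoly g))
    (I : Submodule (FreePoly g) (Fin ℓ → FreePoly g)) :
    IsLCReal L C (LCrad L C I) := by
  intro a b p q hpC hqC hm
  constructor
  · intro i
    rw [LCrad, Submodule.mem_sInf]
    intro J hJ
    exact (hJ.2 a b p q hpC hqC (modPlusStar_mono' (sInf_le hJ) hm)).1 i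
  · intro j i
    rw [LCrad, Submodule.mem_sInf]
    intro J hJ
    exact (hJ.2 a b p q hpC hqC (modPlusStar_mono' (sInf_le hJ) hm)).2 j i

lemma LCradStrong_isReal' {g ν ℓ : ℕ} (L : Matrix (Fin ν) (Fin ν) (FreePoly g))
    (C : Submodule ℝ (Fin ℓ → FreePoly g))
    (I : Submodule (FreePoly g) (Fin ℓ → FreePoly g)) :
    IsLCRealStrong L C (LCradStrong L C I) := by
  intro a b p q hpC hqC hm
  constructor
  · intro i
    rw [LCradStrong, Submodule.mem_sInf]
    intro J hJ
    exact (hJ.2 a b p q hpC hqC (modPlusStar_mono' (sInf_le hJ) hm)).1 i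
  · intro j i
    rw [LCradStrong, Submodule.mem_sInf]
    intro J hJ
    exact (hJ.2 a b p q hpC hqC (modPlusStar_mono' (sInf_le hJ) hm)).2 j i

lemma I_le_LCrad' {g ν ℓ : ℕ} (L : Matrix (Fin ν) (Fin ν) (FreePoly g))
    (C : Submodule ℝ (Fin ℓ → FreePoly g))
    (I : Submodule (FreePoly g) (Fin ℓ → FreePoly g)) :
    I ≤ LCrad L C I := le_sInf fun _ hJ => hJ.1

lemma I_le_LCradStrong' {g ν ℓ : ℕ} (L : Matrix (Fin ν) (Fin ν) (FreePoly g))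
    (C : Submodule ℝ (Fin ℓ → FreePoly g))
    (I : Submodule (FreePoly g) (Fin ℓ → FreePoly g)) :
    I ≤ LCradStrong L C I := le_sInf fun _ hJ => hJ.1

/-- **Generation of the `(L,C)`-real radical.** -/
theorem lcrad_generation (g ν ℓ σ : ℕ) (hg : 0 < g)
    (L : Matrix (Fin ν) (Fin ν) (FreePoly g)) (hLsym : starM L = L)
    (hLdeg : ∀ i j, L i j ∈ degLE g σ)
    (C : Submodule ℝ (Fin ℓ → FreePoly g)) (hC : IsChipSpace C)
    (hCfin : FiniteDimensional ℝ ↥C)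
    (I : Submodule (FreePoly g) (Fin ℓ → FreePoly g)) :
    (∃ S : Set (Fin ℓ → FreePoly g), (∀ s ∈ S, s ∈ degC σ C) ∧
        LCrad L C I = Submodule.span (FreePoly g) (↑I ∪ S)) ∧
    (∃ S : Set (Fin ℓ → FreePoly g), (∀ s ∈ S, s ∈ C) ∧
        LCradStrong L C I = Submodule.span (FreePoly g) (↑I ∪ S)) := by
  constructor
  · set R := LCrad L C I with hR
    refine ⟨{v | v ∈ R ∧ v ∈ degC σ C}, fun s hs => hs.2, ?_⟩
    set S : Set (Fin ℓ → FreePoly g) := {v | v ∈ R ∧ v ∈ degC σ C}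
    set J := Submodule.span (FreePoly g) (↑I ∪ S) with hJ
    have hJle : J ≤ R := by
      rw [hJ, Submodule.span_le]
      rintro v (hv | hv)
      · exact I_le_LCrad' L C I hv
      · exact hv.1
    have hJreal : IsLCReal L C J := by
      intro a b p q hpC hqC hm
      have hm' := (LCrad_isReal' L C I) a b p q hpC hqC
        (modPlusStar_mono' hJle hm)
      constructor
      · intro i
        exact Submodule.subset_span (Or.inr ⟨hm'.1 i, C_le_degC' σ C _ (hpC i)⟩)
      · intro j i
        refine Submodule.subset_span (Or.inr ⟨hm'.2 j i, ?_⟩)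
        have hrow : (L * q j) i = ∑ k, (fun b => L i k * q j k b) := by
          funext b
          simp [Matrix.mul_apply]
        rw [hrow]
        exact Submodule.sum_mem _ fun k _ =>
          Submodule.subset_span ⟨L i k, hLdeg i k, q j k, hqC j k, rfl⟩
    refine le_antisymm (sInf_le ⟨fun v hv => Submodule.subset_span (Or.inl hv), hJreal⟩)
      hJle
  · set R := LCradStrong L C I with hR
    refine ⟨{v | v ∈ R ∧ v ∈ C}, fun s hs => hs.2, ?_⟩
    set S : Set (Fin ℓ → FreePoly g) := {v | v ∈ R ∧ v ∈ C}
    set J := Submodule.span (FreePoly g) (↑I ∪ S) with hJ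
    have hJle : J ≤ R := by
      rw [hJ, Submodule.span_le]
      rintro v (hv | hv)
      · exact I_le_LCradStrong' L C I hv
      · exact hv.1
    have hJreal : IsLCRealStrong L C J := by
      intro a b p q hpC hqC hm
      have hm' := (LCradStrong_isReal' L C I) a b p q hpC hqC
        (modPlusStar_mono' hJle hm)
      constructor
      · intro i
        exact Submodule.subset_span (Or.inr ⟨hm'.1 i, hpC i⟩)
      · intro j i
        exact Submodule.subset_span (Or.inr ⟨hm'.2 j i, hqC j i⟩)
    refine le_antisymm (sInf_le ⟨fun v hv => Submodule.subset_span (Or.inl hv), hJreal⟩)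
      hJle
end

section
/- Let B ⊆ S^k be a vector subspace of the space of real symmetric k×k matrices, and let B^⊥ be its orthogonal complement with respect to the trace inner product ⟨A,B⟩ = Tr(AB). Then exactly one of the following three alternatives holds: (1) there exists B ∈ B with B ≻ 0, and there is no nonzero A ∈ B^⊥ with A ⪰ 0; (2) there exists A ∈ B^⊥ with A ≻ 0, and there is no nonzero B ∈ B with B ⪰ 0; (3) there exist nonzero B ∈ B and nonzero A ∈ B^⊥ with A ⪰ 0 and B ⪰ 0, but there exists no B ∈ B with B ≻ 0 and no A ∈ B^⊥ with A ≻ 0. -/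
/-!
The alternatives exclude each other because `tr (A M) > 0` whenever `A ⪰ 0` is nonzero and
`M ≻ 0`, whereas `tr (A M) = 0` for `M ∈ 𝓑` and `A ∈ 𝓑^⊥`. They exhaust all cases by
Hahn–Banach: if `𝓑` contains no positive definite matrix, it misses the open convex cone of
matrices with positive definite quadratic form, and a separating functional, written as
`M ↦ tr (A M)` with `A` symmetric, yields a nonzero `A ⪰ 0` in `𝓑^⊥`. Since `(𝓑^⊥)^⊥ = 𝓑`
inside the symmetric matrices, the same argument applied to `𝓑^⊥` yields a nonzero `M ⪰ 0` in
`𝓑` when `𝓑^⊥` contains no positive definite matrix.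
-/

open scoped BigOperators
open Matrix

/-- The orthogonal complement of `B` inside the symmetric matrices, with respect to
the trace inner product. -/
def symPerp {k : ℕ} (B : Submodule ℝ (Matrix (Fin k) (Fin k) ℝ)) :
    Set (Matrix (Fin k) (Fin k) ℝ) :=
  { A | A.IsSymm ∧ ∀ M ∈ B, (A * M).trace = 0 }

open Filter Topology

section

variable {n : Type*} [Fintype n]

namespace Matrix

theorem PosSemidef.trace_mul_pos_of_posDef {A M : Matrix n n ℝ} (hA : A.PosSemidef)
    (hA0 : A ≠ 0) (hM : M.PosDef) : 0 < (A * M).trace := by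
  classical
  obtain ⟨D, rfl⟩ : ∃ D : Matrix n n ℝ, M = star D * D := by
    open scoped MatrixOrder in
    exact CStarAlgebra.nonneg_iff_eq_star_mul_self.mp hM.posSemidef.nonneg
  have hD : IsUnit D := isUnit_of_mul_isUnit_right hM.isUnit
  have hDAD : (D * A * Dᴴ).PosSemidef := hA.mul_mul_conjTranspose_same D
  have hDAD0 : D * A * Dᴴ ≠ 0 := by
    rwa [Ne, ← star_eq_conjTranspose, hD.star.mul_left_eq_zero, hD.mul_right_eq_zero]
  have htrace : (A * (star D * D)).trace = (D * A * Dᴴ).trace := by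
    rw [star_eq_conjTranspose, ← Matrix.mul_assoc, trace_mul_comm, Matrix.mul_assoc]
  rw [htrace]
  exact hDAD.trace_nonneg.lt_of_ne' (hDAD.trace_eq_zero_iff.not.mpr hDAD0)

lemma PosDef.ne_zero [Nonempty n] {M : Matrix n n ℝ} (hM : M.PosDef) : M ≠ 0 := by
  rintro rfl
  simpa using hM.trace_pos

end Matrix

/-- Unlike the positive definite matrices, this cone of not necessarily symmetric matrices is
open in the space of all matrices, as the separation argument requires. -/
def posQuadCone (n : Type*) [Fintype n] : Set (Matrix n n ℝ) :=
  {M | ∀ x : n → ℝ, x ≠ 0 → 0 < x ⬝ᵥ M *ᵥ x}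

lemma smul_dotProduct_mulVec_smul (c : ℝ) (x : n → ℝ) (M : Matrix n n ℝ) :
    (c • x) ⬝ᵥ M *ᵥ (c • x) = c ^ 2 * (x ⬝ᵥ M *ᵥ x) := by
  rw [mulVec_smul, smul_dotProduct, dotProduct_smul, smul_eq_mul, smul_eq_mul]
  ring

lemma convex_posQuadCone : Convex ℝ (posQuadCone n) := by
  intro M hM N hN a b ha hb hab x hx
  rw [add_mulVec, smul_mulVec, smul_mulVec, dotProduct_add, dotProduct_smul, dotProduct_smul,
    smul_eq_mul, smul_eq_mul]
  rcases ha.eq_or_lt with rfl | ha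
  · rw [zero_add] at hab
    simpa [hab] using hN x hx
  · exact add_pos_of_pos_of_nonneg (mul_pos ha (hM x hx)) (mul_nonneg hb (hN x hx).le)

lemma isOpen_posQuadCone : IsOpen (posQuadCone n) := by
  refine isOpen_iff_eventually.mpr fun M₀ hM₀ => ?_
  have hcont : Continuous fun p : Matrix n n ℝ × (n → ℝ) => p.2 ⬝ᵥ p.1 *ᵥ p.2 := by
    fun_prop
  have hsphere : ∀ᶠ M in 𝓝 M₀, ∀ x ∈ Metric.sphere (0 : n → ℝ) 1, 0 < x ⬝ᵥ M *ᵥ x := by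
    refine (isCompact_sphere 0 1).eventually_forall_of_forall_eventually fun x hx => ?_
    have hx0 : x ≠ 0 := ne_zero_of_mem_unit_sphere ⟨x, hx⟩
    exact hcont.continuousAt.eventually (lt_mem_nhds (hM₀ x hx0))
  filter_upwards [hsphere] with M hM x hx
  have hxn : 0 < ‖x‖ := norm_pos_iff.mpr hx
  have hu : ‖x‖⁻¹ • x ∈ Metric.sphere (0 : n → ℝ) 1 := by
    rw [mem_sphere_zero_iff_norm, norm_smul, norm_inv, norm_norm, inv_mul_cancel₀ hxn.ne']
  have hx_eq : x = ‖x‖ • ‖x‖⁻¹ • x := by rw [smul_inv_smul₀ hxn.ne']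
  rw [hx_eq, smul_dotProduct_mulVec_smul]
  exact mul_pos (by positivity) (hM _ hu)

lemma posDef_iff_isSymm_and_mem_posQuadCone {M : Matrix n n ℝ} :
    M.PosDef ↔ M.IsSymm ∧ M ∈ posQuadCone n := by
  simp [posDef_iff_dotProduct_mulVec, posQuadCone, IsHermitian, IsSymm]

lemma one_mem_posQuadCone [DecidableEq n] : (1 : Matrix n n ℝ) ∈ posQuadCone n :=
  (posDef_iff_isSymm_and_mem_posQuadCone.mp PosDef.one).2

lemma Matrix.PosSemidef.add_smul_one_mem_posQuadCone [DecidableEq n] {M : Matrix n n ℝ}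
    (hM : M.PosSemidef) {ε : ℝ} (hε : 0 < ε) : M + ε • (1 : Matrix n n ℝ) ∈ posQuadCone n := by
  intro x hx
  rw [add_mulVec, dotProduct_add, smul_mulVec, dotProduct_smul, smul_eq_mul]
  have hMx : 0 ≤ x ⬝ᵥ M *ᵥ x := by simpa using hM.dotProduct_mulVec_nonneg x
  exact add_pos_of_nonneg_of_pos hMx (mul_pos hε (one_mem_posQuadCone x hx))

lemma trace_mul_vecMulVec_self (A : Matrix n n ℝ) (x : n → ℝ) :
    (A * vecMulVec x x).trace = x ⬝ᵥ A *ᵥ x := by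
  rw [mul_vecMulVec, trace_vecMulVec, dotProduct_comm]

lemma exists_isSymm_trace_mul_eq (f : Matrix n n ℝ →ₗ[ℝ] ℝ) :
    ∃ A : Matrix n n ℝ, A.IsSymm ∧ ∀ M : Matrix n n ℝ, M.IsSymm → (A * M).trace = f M := by
  classical
  set G : Matrix n n ℝ := of fun i j => f (single j i 1)
  have hsingle : ∀ i j (c : ℝ), f (single i j c) = c * f (single i j 1) := fun i j c => by
    rw [← smul_eq_mul, ← f.map_smul, smul_single, smul_eq_mul, mul_one]
  have hG : ∀ M : Matrix n n ℝ, (G * M).trace = f M := by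
    intro M
    conv_rhs => rw [matrix_eq_sum_single M]
    simp only [map_sum, trace, diag, mul_apply, G, of_apply]
    rw [Finset.sum_comm]
    exact Finset.sum_congr rfl fun i _ => Finset.sum_congr rfl fun j _ => by
      rw [hsingle i j (M i j), mul_comm]
  refine ⟨(1 / 2 : ℝ) • (G + Gᵀ), ?_, fun M hM => ?_⟩
  · simp [IsSymm, add_comm]
  · have hGt : (Gᵀ * M).trace = (G * M).trace := by
      rw [← hM.eq, ← transpose_mul, trace_transpose, hM.eq, trace_mul_comm]
    rw [smul_mul, trace_smul, add_mul, trace_add, hGt, hG]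
    simp only [smul_eq_mul]
    ring

/-- `symPerp` as a submodule, over an arbitrary index type. -/
def symOrthogonal (B : Submodule ℝ (Matrix n n ℝ)) : Submodule ℝ (Matrix n n ℝ) where
  carrier := {A | A.IsSymm ∧ ∀ M ∈ B, (A * M).trace = 0}
  add_mem' hA hA' := ⟨hA.1.add hA'.1, fun M hM => by
    rw [add_mul, trace_add, hA.2 M hM, hA'.2 M hM, add_zero]⟩
  zero_mem' := ⟨isSymm_zero, fun M _ => by rw [zero_mul, trace_zero]⟩
  smul_mem' c A hA := ⟨hA.1.smul c, fun M hM => by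
    rw [smul_mul, trace_smul, hA.2 M hM, smul_zero]⟩

lemma mem_symOrthogonal {B : Submodule ℝ (Matrix n n ℝ)} {A : Matrix n n ℝ} :
    A ∈ symOrthogonal B ↔ A.IsSymm ∧ ∀ M ∈ B, (A * M).trace = 0 := Iff.rfl

lemma symOrthogonal_symOrthogonal_le {B : Submodule ℝ (Matrix n n ℝ)}
    (hB : ∀ M ∈ B, M.IsSymm) : symOrthogonal (symOrthogonal B) ≤ B := by
  intro M ⟨hM, hMperp⟩
  by_contra hMB
  obtain ⟨f, hfM, hfB⟩ := B.exists_dual_map_eq_bot_of_notMem hMB inferInstance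
  obtain ⟨A, hA, hAf⟩ := exists_isSymm_trace_mul_eq f
  have hAperp : A ∈ symOrthogonal B := ⟨hA, fun N hN => by
    rw [hAf N (hB N hN)]
    exact (Submodule.mem_bot ℝ).mp (hfB ▸ Submodule.mem_map_of_mem hN)⟩
  apply hfM
  rw [← hAf M hM, trace_mul_comm]
  exact hMperp A hAperp

theorem exists_posSemidef_mem_symOrthogonal_of_not_exists_posDef
    {B : Submodule ℝ (Matrix n n ℝ)} (hB : ∀ M ∈ B, M.IsSymm) (h : ¬∃ M ∈ B, M.PosDef) :
    ∃ A ∈ symOrthogonal B, A ≠ 0 ∧ A.PosSemidef := by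
  classical
  have hdisj : Disjoint (posQuadCone n) (B : Set (Matrix n n ℝ)) :=
    Set.disjoint_left.mpr fun M hM hMB =>
      h ⟨M, hMB, posDef_iff_isSymm_and_mem_posQuadCone.mpr ⟨hB M hMB, hM⟩⟩
  obtain ⟨f, u, hfP, hfB⟩ :=
    geometric_hahn_banach_open convex_posQuadCone isOpen_posQuadCone B.convex hdisj
  have hf0 : ∀ M ∈ B, f M = 0 := by
    intro M hM
    by_contra hne
    have := hfB (((u - 1) / f M) • M) (B.smul_mem _ hM)
    rw [map_smul, smul_eq_mul, div_mul_cancel₀ _ hne] at this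
    linarith
  have hfneg : ∀ M ∈ posQuadCone n, f M < 0 := fun M hM =>
    (hfP M hM).trans_le (by simpa using hfB 0 B.zero_mem)
  have hf1 : f 1 < 0 := hfneg 1 one_mem_posQuadCone
  have hfvv : ∀ x : n → ℝ, f (vecMulVec x x) ≤ 0 := by
    intro x
    have hvv : (vecMulVec x x).PosSemidef := by
      simpa only [star_trivial] using posSemidef_vecMulVec_self_star x
    refine le_of_forall_pos_lt_add fun δ hδ => ?_
    have := hfneg _ (hvv.add_smul_one_mem_posQuadCone (div_pos hδ (neg_pos.mpr hf1)))
    have hscale : δ / -f 1 * f 1 = -δ := by rw [div_neg, neg_mul, div_mul_cancel₀ _ hf1.ne]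
    rw [map_add, map_smul, smul_eq_mul, hscale] at this
    linarith
  obtain ⟨A, hA, hAf⟩ := exists_isSymm_trace_mul_eq (-f.toLinearMap)
  refine ⟨A, ⟨hA, fun M hM => by simp [hAf M (hB M hM), hf0 M hM]⟩, ?_, ?_⟩
  · rintro rfl
    have h1 := hAf 1 isSymm_one
    rw [zero_mul, trace_zero, LinearMap.neg_apply] at h1
    exact hf1.ne (neg_eq_zero.mp h1.symm)
  · refine .of_dotProduct_mulVec_nonneg hA fun x => ?_
    have := hAf (vecMulVec x x) (by simp [IsSymm, transpose_vecMulVec])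
    simp only [star_trivial, ← trace_mul_vecMulVec_self, this]
    simpa using hfvv x

theorem exists_posSemidef_mem_of_not_exists_posDef_mem_symOrthogonal
    {B : Submodule ℝ (Matrix n n ℝ)} (hB : ∀ M ∈ B, M.IsSymm)
    (h : ¬∃ A ∈ symOrthogonal B, A.PosDef) : ∃ M ∈ B, M ≠ 0 ∧ M.PosSemidef := by
  obtain ⟨M, hM, hM0, hMpsd⟩ :=
    exists_posSemidef_mem_symOrthogonal_of_not_exists_posDef
      (fun _ hA => (mem_symOrthogonal.mp hA).1) h
  exact ⟨M, symOrthogonal_symOrthogonal_le hB hM, hM0, hMpsd⟩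

end

/-- **Bohnenblust dichotomy for subspaces of symmetric matrices.** -/
theorem bohnenblust_trichotomy (k : ℕ) (hk : 0 < k)
    (B : Submodule ℝ (Matrix (Fin k) (Fin k) ℝ)) (hB : ∀ A ∈ B, A.IsSymm) :
    (((∃ M ∈ B, M.PosDef) ∧ ¬∃ A ∈ symPerp B, A ≠ 0 ∧ A.PosSemidef) ∧
      ¬((∃ A ∈ symPerp B, A.PosDef) ∧ ¬∃ M ∈ B, M ≠ 0 ∧ M.PosSemidef) ∧
      ¬((∃ M ∈ B, M ≠ 0 ∧ M.PosSemidef) ∧ (∃ A ∈ symPerp B, A ≠ 0 ∧ A.PosSemidef) ∧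
        (¬∃ M ∈ B, M.PosDef) ∧ ¬∃ A ∈ symPerp B, A.PosDef)) ∨
    ((¬((∃ M ∈ B, M.PosDef) ∧ ¬∃ A ∈ symPerp B, A ≠ 0 ∧ A.PosSemidef)) ∧
      ((∃ A ∈ symPerp B, A.PosDef) ∧ ¬∃ M ∈ B, M ≠ 0 ∧ M.PosSemidef) ∧
      ¬((∃ M ∈ B, M ≠ 0 ∧ M.PosSemidef) ∧ (∃ A ∈ symPerp B, A ≠ 0 ∧ A.PosSemidef) ∧
        (¬∃ M ∈ B, M.PosDef) ∧ ¬∃ A ∈ symPerp B, A.PosDef)) ∨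
    ((¬((∃ M ∈ B, M.PosDef) ∧ ¬∃ A ∈ symPerp B, A ≠ 0 ∧ A.PosSemidef)) ∧
      (¬((∃ A ∈ symPerp B, A.PosDef) ∧ ¬∃ M ∈ B, M ≠ 0 ∧ M.PosSemidef)) ∧
      ((∃ M ∈ B, M ≠ 0 ∧ M.PosSemidef) ∧ (∃ A ∈ symPerp B, A ≠ 0 ∧ A.PosSemidef) ∧
        (¬∃ M ∈ B, M.PosDef) ∧ ¬∃ A ∈ symPerp B, A.PosDef)) := by
  have : Nonempty (Fin k) := Fin.pos_iff_nonempty.mp hk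
  have posDef_excludes_perp :
      (∃ M ∈ B, M.PosDef) → ¬∃ A ∈ symPerp B, A ≠ 0 ∧ A.PosSemidef :=
    fun ⟨M, hMB, hM⟩ ⟨A, hA, hA0, hApsd⟩ =>
      (hApsd.trace_mul_pos_of_posDef hA0 hM).ne' (hA.2 M hMB)
  have perp_posDef_excludes :
      (∃ A ∈ symPerp B, A.PosDef) → ¬∃ M ∈ B, M ≠ 0 ∧ M.PosSemidef :=
    fun ⟨A, hA, hApd⟩ ⟨M, hMB, hM0, hM⟩ =>
      (hM.trace_mul_pos_of_posDef hM0 hApd).ne' (by rw [trace_mul_comm]; exact hA.2 M hMB)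
  by_cases hP1 : ∃ M ∈ B, M.PosDef
  · obtain ⟨M, hMB, hM⟩ := hP1
    exact Or.inl ⟨⟨⟨M, hMB, hM⟩, posDef_excludes_perp ⟨M, hMB, hM⟩⟩,
      fun h => h.2 ⟨M, hMB, hM.ne_zero, hM.posSemidef⟩, fun h => h.2.2.1 ⟨M, hMB, hM⟩⟩
  by_cases hP2 : ∃ A ∈ symPerp B, A.PosDef
  · exact Or.inr <| Or.inl
      ⟨fun h => hP1 h.1, ⟨hP2, perp_posDef_excludes hP2⟩, fun h => h.2.2.2 hP2⟩
  · exact Or.inr <| Or.inr ⟨fun h => hP1 h.1, fun h => hP2 h.1,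
      exists_posSemidef_mem_of_not_exists_posDef_mem_symOrthogonal hB hP2,
      exists_posSemidef_mem_symOrthogonal_of_not_exists_posDef hB hP1, hP1, hP2⟩
end
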